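/- Let X be a nonempty complete metric space without isolated points, and let f, g : X → ℝ be functions such that C(f) and C(g) are both dense in X. Then C(f) ∩ C(g) is uncountable. -/

import Mathlib

/-!
In a complete metric space the continuity points of a real function form a `Gδ` set, so
`C(f) ∩ C(g)` is a dense `Gδ`, hence residual and, by Baire, not meagre. Without isolated
points every singleton is nowhere dense, so every countable set is meagre.
-/

open Filter Topology Set

theorem isNowhereDense_singleton {X : Type*} [TopologicalSpace X] [T1Space X] (x : X)
    [NeBot (𝓝[≠] x)] : IsNowhereDense ({x} : Set X) := by
  rw [IsNowhereDense, closure_singleton, interior_singleton]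

theorem Set.Countable.isMeagre {X : Type*} [TopologicalSpace X] [T1Space X]
    (hX : ∀ x : X, NeBot (𝓝[≠] x)) {s : Set X} (hs : s.Countable) : IsMeagre s := by
  rw [← biUnion_of_singleton s]
  refine isMeagre_biUnion hs fun x _ ↦ ?_
  have := hX x
  exact (isNowhereDense_singleton x).isMeagre

theorem setOf_continuousAt_mem_residual {X Y : Type*} [TopologicalSpace X] [TopologicalSpace Y]
    [TopologicalSpace.PseudoMetrizableSpace Y] {f : X → Y} (hf : Dense {x | ContinuousAt f x}) :
    {x | ContinuousAt f x} ∈ residual X :=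
  residual_of_dense_Gδ (.setOfPred_continuousAt f) hf

theorem stmt6 {X : Type*} [MetricSpace X] [CompleteSpace X] [Nonempty X]
    (hX : ∀ x : X, Filter.NeBot (nhdsWithin x {x}ᶜ))
    (f g : X → ℝ)
    (hf : Dense {x : X | ContinuousAt f x}) (hg : Dense {x : X | ContinuousAt g x}) :
    ¬ ({x : X | ContinuousAt f x} ∩ {x : X | ContinuousAt g x}).Countable := by
  intro hcount
  have hres : {x | ContinuousAt f x} ∩ {x | ContinuousAt g x} ∈ residual X :=
    inter_mem (setOf_continuousAt_mem_residual hf) (setOf_continuousAt_mem_residual hg)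
  exact not_isMeagre_of_mem_residual hres (hcount.isMeagre hX)
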